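/- Let H be a real Hilbert space and f : H → ℝ a convex continuous function. Suppose that for each ε > 0 an element u_ε ∈ H is given which minimizes the regularized functional u ↦ f(u) + ε·‖u‖² over H. Then the following are equivalent: (i) f attains its infimum on H (there exists u* with f(u*) ≤ f(u) for all u); (ii) the family (u_ε)_{ε>0} is bounded, i.e., sup_{ε>0} ‖u_ε‖ < ∞; (iii) the family (u_ε)_{ε>0} converges strongly in H as ε → 0⁺ (there exists v ∈ H with ‖u_ε − v‖ → 0 along the filter of positive ε tending to 0). Moreover, whenever (i), (ii), or (iii) holds, the strong limit of (u_ε) as ε → 0⁺ is a minimizer of f. -/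

import Mathlib

/-!
Since `f + ε ‖·‖²` is `2ε`-strongly convex, comparing the minimality of `u δ` and `u ε` for
`0 < δ ≤ ε` gives `‖u ε‖ ≤ ‖u δ‖` and `‖u δ - u ε‖² ≤ 2 (‖u δ‖² - ‖u ε‖²)`. If `‖u ε‖` is bounded,
the monotone quantity `‖u ε‖²` converges as `ε → 0⁺`, so `u` is Cauchy there and converges by
completeness. Any such limit minimizes `f`, by letting `ε → 0⁺` in the minimality of `u ε`;
and a minimizer `x` of `f` forces `‖u ε‖ ≤ ‖x‖`.
-/

open Filter Set Topology

lemma ConvexOn.strongConvexOn_add_mul_sq_norm {E : Type*} [NormedAddCommGroup E]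
    [InnerProductSpace ℝ E] {s : Set E} {f : E → ℝ} (hf : ConvexOn ℝ s f) (ε : ℝ) :
    StrongConvexOn s (2 * ε) fun x ↦ f x + ε * ‖x‖ ^ 2 := by
  rw [strongConvexOn_iff_convex]
  convert hf using 2 with x
  ring

lemma StrongConvexOn.add_mul_sq_norm_sub_le_of_isMinOn {E : Type*} [NormedAddCommGroup E]
    [NormedSpace ℝ E] {F : E → ℝ} {m : ℝ} {x : E} (hF : StrongConvexOn univ m F)
    (hx : IsMinOn F univ x) (y : E) :
    F x + m / 4 * ‖y - x‖ ^ 2 ≤ F y := by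
  have hmid := hF.2 (mem_univ x) (mem_univ y) (show (0 : ℝ) ≤ 1 / 2 by norm_num)
    (show (0 : ℝ) ≤ 1 / 2 by norm_num) (by norm_num)
  have hxmid := isMinOn_univ_iff.1 hx ((1 / 2 : ℝ) • x + (1 / 2 : ℝ) • y)
  simp only [smul_eq_mul, norm_sub_rev x y] at hmid
  linarith

def IsTikhonovFamily {H : Type*} [Norm H] (f : H → ℝ) (u : ℝ → H) : Prop :=
  ∀ ε : ℝ, 0 < ε → ∀ v : H, f (u ε) + ε * ‖u ε‖ ^ 2 ≤ f v + ε * ‖v‖ ^ 2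

namespace IsTikhonovFamily

section Norm

variable {H : Type*} [Norm H] {f : H → ℝ} {u : ℝ → H}

lemma antitoneOn_sq_norm (hu : IsTikhonovFamily f u) :
    AntitoneOn (fun ε ↦ ‖u ε‖ ^ 2) (Ioi 0) := by
  intro δ hδ ε hε hδε
  obtain rfl | hlt := hδε.eq_or_lt
  · rfl
  have h₁ := hu ε hε (u δ)
  have h₂ := hu δ hδ (u ε)
  exact le_of_mul_le_mul_left (by linarith) (sub_pos.2 hlt)

end Norm

section Seminormed

variable {H : Type*} [SeminormedAddCommGroup H] {f : H → ℝ} {u : ℝ → H}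

lemma norm_le_of_isMinOn (hu : IsTikhonovFamily f u) {x : H} (hx : IsMinOn f univ x)
    {ε : ℝ} (hε : 0 < ε) : ‖u ε‖ ≤ ‖x‖ := by
  have h₁ := hu ε hε x
  have h₂ := isMinOn_univ_iff.1 hx (u ε)
  have : ‖u ε‖ ^ 2 ≤ ‖x‖ ^ 2 := le_of_mul_le_mul_left (by linarith) hε
  exact pow_le_pow_iff_left₀ (norm_nonneg _) (norm_nonneg _) two_ne_zero |>.1 this

lemma isMinOn_of_tendsto (hu : IsTikhonovFamily f u) (hf : Continuous f) {v : H}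
    (hv : Tendsto u (𝓝[>] 0) (𝓝 v)) : IsMinOn f univ v := by
  refine isMinOn_univ_iff.2 fun w ↦ ?_
  have hF : Continuous fun p : ℝ × H ↦ f p.2 + p.1 * ‖p.2‖ ^ 2 := by fun_prop
  have hε : Tendsto (fun ε : ℝ ↦ ε) (𝓝[>] 0) (𝓝 0) := tendsto_nhdsWithin_of_tendsto_nhds tendsto_id
  have hlhs := (hF.tendsto (0, v)).comp (hε.prodMk_nhds hv)
  have hrhs := (hF.tendsto (0, w)).comp (hε.prodMk_nhds tendsto_const_nhds)
  have hle : ∀ᶠ ε in 𝓝[>] (0 : ℝ), f (u ε) + ε * ‖u ε‖ ^ 2 ≤ f w + ε * ‖w‖ ^ 2 :=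
    eventually_mem_nhdsWithin.mono fun ε hε ↦ hu ε hε w
  simpa using le_of_tendsto_of_tendsto hlhs hrhs hle

end Seminormed

section InnerProduct

variable {H : Type*} [NormedAddCommGroup H] [InnerProductSpace ℝ H] {f : H → ℝ} {u : ℝ → H}

lemma add_mul_sq_norm_sub_le (hu : IsTikhonovFamily f u) (hf : ConvexOn ℝ univ f) {ε : ℝ}
    (hε : 0 < ε) (v : H) :
    f (u ε) + ε * ‖u ε‖ ^ 2 + ε / 2 * ‖v - u ε‖ ^ 2 ≤ f v + ε * ‖v‖ ^ 2 := by
  have := (hf.strongConvexOn_add_mul_sq_norm ε).add_mul_sq_norm_sub_le_of_isMinOn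
    (isMinOn_univ_iff.2 (hu ε hε)) v
  linarith

lemma sq_norm_sub_le (hu : IsTikhonovFamily f u) (hf : ConvexOn ℝ univ f) {δ ε : ℝ}
    (hδ : 0 < δ) (hδε : δ ≤ ε) :
    ‖u δ - u ε‖ ^ 2 ≤ 2 * (‖u δ‖ ^ 2 - ‖u ε‖ ^ 2) := by
  have hε : 0 < ε := hδ.trans_le hδε
  have h₁ := hu.add_mul_sq_norm_sub_le hf hε (u δ)
  have h₂ := hu δ hδ (u ε)
  have hmono := hu.antitoneOn_sq_norm hδ hε hδε
  have hgap : 0 ≤ δ * (‖u δ‖ ^ 2 - ‖u ε‖ ^ 2) := mul_nonneg hδ.le (sub_nonneg.2 hmono)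
  have : ε / 2 * ‖u δ - u ε‖ ^ 2 ≤ ε / 2 * (2 * (‖u δ‖ ^ 2 - ‖u ε‖ ^ 2)) := by linarith
  exact le_of_mul_le_mul_left this (by positivity)

lemma sq_norm_sub_le_abs (hu : IsTikhonovFamily f u) (hf : ConvexOn ℝ univ f) {δ ε : ℝ}
    (hδ : 0 < δ) (hε : 0 < ε) :
    ‖u δ - u ε‖ ^ 2 ≤ 2 * |‖u δ‖ ^ 2 - ‖u ε‖ ^ 2| := by
  rcases le_total δ ε with hδε | hεδ
  · exact (hu.sq_norm_sub_le hf hδ hδε).trans (by gcongr; exact le_abs_self _)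
  · rw [norm_sub_rev, abs_sub_comm]
    exact (hu.sq_norm_sub_le hf hε hεδ).trans (by gcongr; exact le_abs_self _)

lemma exists_tendsto_of_bounded [CompleteSpace H] (hu : IsTikhonovFamily f u)
    (hf : ConvexOn ℝ univ f) {M : ℝ} (hM : ∀ ε : ℝ, 0 < ε → ‖u ε‖ ≤ M) :
    ∃ v, Tendsto u (𝓝[>] 0) (𝓝 v) := by
  have hbdd : BddAbove ((fun ε ↦ ‖u ε‖ ^ 2) '' Ioi 0) :=
    ⟨M ^ 2, forall_mem_image.2 fun ε hε ↦ pow_le_pow_left₀ (norm_nonneg _) (hM ε hε) 2⟩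
  have hlim := hu.antitoneOn_sq_norm.tendsto_nhdsGT hbdd
  have hgap : Tendsto (fun p : ℝ × ℝ ↦ √(2 * |‖u p.1‖ ^ 2 - ‖u p.2‖ ^ 2|))
      (𝓝[>] 0 ×ˢ 𝓝[>] 0) (𝓝 0) := by
    simpa using (((hlim.comp tendsto_fst).sub (hlim.comp tendsto_snd)).abs.const_mul 2).sqrt
  refine cauchy_map_iff_exists_tendsto.1 <| cauchy_map_iff'.2 <|
    tendsto_uniformity_iff_dist_tendsto_zero.2 <| squeeze_zero' (.of_forall fun _ ↦ dist_nonneg)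
      ?_ hgap
  filter_upwards [prod_mem_prod self_mem_nhdsWithin self_mem_nhdsWithin] with ⟨δ, ε⟩ ⟨hδ, hε⟩
  rw [Real.le_sqrt dist_nonneg (by positivity), dist_eq_norm]
  exact hu.sq_norm_sub_le_abs hf hδ hε

end InnerProduct

end IsTikhonovFamily

/-- Abstract form of Theorem 3.1: for a convex continuous `f` on a real Hilbert
space with Tikhonov minimizers `u ε` of `f + ε‖·‖²` (for each `ε > 0`), the
following are equivalent: (i) `f` attains its infimum; (ii) the family
`(u ε)_{ε>0}` is bounded; (iii) `u ε` converges strongly as `ε → 0⁺`.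
Moreover, any strong limit of `u ε` as `ε → 0⁺` is a minimizer of `f`. -/
theorem tikhonov_tfae
    {H : Type*} [NormedAddCommGroup H] [InnerProductSpace ℝ H] [CompleteSpace H]
    (f : H → ℝ) (hconv : ConvexOn ℝ Set.univ f) (hcont : Continuous f)
    (u : ℝ → H)
    (hmin : ∀ ε : ℝ, 0 < ε → ∀ v : H, f (u ε) + ε * ‖u ε‖ ^ 2 ≤ f v + ε * ‖v‖ ^ 2) :
    ((∃ ustar : H, ∀ v : H, f ustar ≤ f v) ↔ (∃ M : ℝ, ∀ ε : ℝ, 0 < ε → ‖u ε‖ ≤ M)) ∧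
    ((∃ ustar : H, ∀ v : H, f ustar ≤ f v) ↔
      (∃ v : H, Tendsto u (nhdsWithin 0 (Ioi 0)) (nhds v))) ∧
    (∀ v : H, Tendsto u (nhdsWithin 0 (Ioi 0)) (nhds v) → ∀ w : H, f v ≤ f w) := by
  have hu : IsTikhonovFamily f u := hmin
  simp_rw [← isMinOn_univ_iff]
  have bounded_of_min : (∃ x, IsMinOn f univ x) → ∃ M : ℝ, ∀ ε : ℝ, 0 < ε → ‖u ε‖ ≤ M :=
    fun ⟨x, hx⟩ ↦ ⟨‖x‖, fun _ ↦ hu.norm_le_of_isMinOn hx⟩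
  have tendsto_of_bounded : (∃ M : ℝ, ∀ ε : ℝ, 0 < ε → ‖u ε‖ ≤ M) →
      ∃ v, Tendsto u (𝓝[>] 0) (𝓝 v) :=
    fun ⟨_, hM⟩ ↦ hu.exists_tendsto_of_bounded hconv hM
  have min_of_tendsto : (∃ v, Tendsto u (𝓝[>] 0) (𝓝 v)) → ∃ x, IsMinOn f univ x :=
    fun ⟨v, hv⟩ ↦ ⟨v, hu.isMinOn_of_tendsto hcont hv⟩
  exact ⟨⟨bounded_of_min, min_of_tendsto ∘ tendsto_of_bounded⟩,
    ⟨tendsto_of_bounded ∘ bounded_of_min, min_of_tendsto⟩,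
    fun _ ↦ hu.isMinOn_of_tendsto hcont⟩
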